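/- For every finite semigroup A and every nonempty string of elements of A, there exists an A-factorization tree of depth at most 3·|A| yielding this string. -/

import Mathlib

/-- A rooted ordered tree whose leaves are labelled by letters of `A` (each leaf
carries a string of length 1 over `A`). -/
inductive FactTree (A : Type*) : Type _
  | leaf (a : A) : FactTree A
  | node (ts : List (FactTree A)) : FactTree A

/-- The product of a nonempty string over a multiplicative structure
(`none` for the empty string). -/
def sprod {A : Type*} [Mul A] : List A → Option A
  | [] => none
  | a :: l => some (l.foldl (· * ·) a)

namespace FactTree

variable {A : Type*}

mutual
  /-- The string yielded by a tree: the concatenation, in order, of the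
  length-1 strings at its leaves. -/
  def yield : FactTree A → List A
    | leaf a => [a]
    | node ts => yieldList ts
  /-- The concatenation of the yields of a list of trees. -/
  def yieldList : List (FactTree A) → List A
    | [] => []
    | t :: ts => yield t ++ yieldList ts
end

mutual
  /-- The depth of a tree: the maximum number of edges on a root-to-leaf path. -/
  def depth : FactTree A → ℕ
    | leaf _ => 0
    | node ts => depthList ts + 1
  /-- Maximum depth in a list of trees. -/
  def depthList : List (FactTree A) → ℕ
    | [] => 0
    | t :: ts => max (depth t) (depthList ts)
end

mutual
  /-- `(T, f)` is an `A`-factorization tree: every non-leaf vertex has at least one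
  child, and for every vertex with more than two children there is an idempotent
  `e ∈ A` such that the product of the yield of each child equals `e`. -/
  def IsFactorization [Mul A] : FactTree A → Prop
    | leaf _ => True
    | node ts => ts ≠ [] ∧
        (2 < ts.length → ∃ e : A, e * e = e ∧ ∀ t ∈ ts, sprod (yield t) = some e) ∧
        IsFactorizationList ts
  /-- All trees in the list satisfy the factorization condition. -/
  def IsFactorizationList [Mul A] : List (FactTree A) → Prop
    | [] => True
    | t :: ts => IsFactorization t ∧ IsFactorizationList ts
end

end FactTree

set_option linter.unusedSectionVars false

namespace FFProof

open FactTree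

section Trees
variable {A : Type*} [Semigroup A]

/-- value of a list of letters in `WithOne A` -/
def mval (l : List A) : WithOne A := (l.map ((↑·) : A → WithOne A)).prod

@[simp] lemma mval_nil : mval ([] : List A) = 1 := rfl

@[simp] lemma mval_append (l l' : List A) : mval (l ++ l') = mval l * mval l' := by
  simp [mval]

lemma mval_cons (a : A) (l : List A) : mval (a :: l) = (a : WithOne A) * mval l := by
  simp [mval]

lemma foldl_mul (l : List A) (a b : A) :
    a * l.foldl (· * ·) b = l.foldl (· * ·) (a * b) := by
  induction l generalizing b with
  | nil => rfl
  | cons c l ih => simpa [List.foldl_cons, mul_assoc] using ih (b * c)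

lemma mval_foldl (a : A) (l : List A) : mval (a :: l) = (↑(l.foldl (· * ·) a) : WithOne A) := by
  induction l generalizing a with
  | nil => simp [mval]
  | cons b l ih =>
      have h1 : mval (a :: b :: l) = mval [a] * mval (b :: l) := by
        simpa using (mval_append [a] (b :: l))
      rw [h1, ih b]
      have h2 : mval [a] = (a : WithOne A) := by simp [mval]
      rw [h2, ← WithOne.coe_mul, WithOne.coe_inj, List.foldl_cons, foldl_mul]

lemma sprod_eq_mval {l : List A} (h : l ≠ []) : ∃ a : A, sprod l = some a ∧ mval l = (a : WithOne A) := by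
  cases l with
  | nil => exact absurd rfl h
  | cons a l => exact ⟨l.foldl (· * ·) a, rfl, mval_foldl a l⟩

lemma mval_eq_one_iff {l : List A} : mval l = 1 ↔ l = [] := by
  constructor
  · intro h
    by_contra hne
    obtain ⟨a, _, hm⟩ := sprod_eq_mval hne
    rw [hm] at h
    exact WithOne.coe_ne_one h
  · rintro rfl; rfl

/-- value of a list of trees -/
def mv (ts : List (FactTree A)) : WithOne A := mval (yieldList ts)

@[simp] lemma yieldList_nil : yieldList ([] : List (FactTree A)) = [] := rfl
@[simp] lemma yieldList_cons (t : FactTree A) (ts) : yieldList (t :: ts) = yield t ++ yieldList ts := rfl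

@[simp] lemma yieldList_append (ts ts' : List (FactTree A)) :
    yieldList (ts ++ ts') = yieldList ts ++ yieldList ts' := by
  induction ts with
  | nil => simp
  | cons t ts ih => simp [ih]

@[simp] lemma mv_nil : mv ([] : List (FactTree A)) = 1 := rfl

@[simp] lemma mv_append (ts ts' : List (FactTree A)) : mv (ts ++ ts') = mv ts * mv ts' := by
  simp [mv]

@[simp] lemma depthList_nil : depthList ([] : List (FactTree A)) = 0 := rfl
@[simp] lemma depthList_cons (t : FactTree A) (ts) :
    depthList (t :: ts) = max (depth t) (depthList ts) := rfl

lemma depth_le_depthList {t : FactTree A} {ts : List (FactTree A)} (h : t ∈ ts) :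
    depth t ≤ depthList ts := by
  induction ts with
  | nil => simp at h
  | cons s ts ih =>
      rcases List.mem_cons.1 h with rfl | h
      · simp
      · exact le_trans (ih h) (by simp)

lemma depthList_le {ts : List (FactTree A)} {d : ℕ} (h : ∀ t ∈ ts, depth t ≤ d) :
    depthList ts ≤ d := by
  induction ts with
  | nil => simp
  | cons t ts ih =>
      simp only [depthList_cons, max_le_iff]
      exact ⟨h t (by simp), ih fun s hs => h s (List.mem_cons_of_mem _ hs)⟩

lemma depthList_subset {ts ts' : List (FactTree A)} (h : ∀ t ∈ ts, t ∈ ts') :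
    depthList ts ≤ depthList ts' :=
  depthList_le fun t ht => depth_le_depthList (h t ht)

@[simp] lemma isFactorizationList_nil : IsFactorizationList ([] : List (FactTree A)) := trivial

lemma isFactorizationList_of_forall {ts : List (FactTree A)}
    (h : ∀ t ∈ ts, IsFactorization t) : IsFactorizationList ts := by
  induction ts with
  | nil => trivial
  | cons t ts ih =>
      exact ⟨h t (by simp), ih fun s hs => h s (List.mem_cons_of_mem _ hs)⟩

@[simp] lemma yield_leaf (a : A) : yield (leaf a : FactTree A) = [a] := rfl
@[simp] lemma yield_node (ts : List (FactTree A)) : yield (node ts) = yieldList ts := rfl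
@[simp] lemma depth_leaf (a : A) : depth (leaf a : FactTree A) = 0 := rfl
@[simp] lemma depth_node (ts : List (FactTree A)) : depth (node ts) = depthList ts + 1 := rfl
@[simp] lemma isFactorization_leaf (a : A) : IsFactorization (leaf a : FactTree A) := trivial

/-- binary node -/
lemma isFactorization_node2 {t₁ t₂ : FactTree A}
    (h₁ : IsFactorization t₁) (h₂ : IsFactorization t₂) :
    IsFactorization (node [t₁, t₂]) := by
  refine ⟨by simp, ?_, h₁, h₂, trivial⟩
  intro h; simp at h

lemma isFactorization_nodeE {ts : List (FactTree A)} (hne : ts ≠ [])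
    (hfact : ∀ t ∈ ts, IsFactorization t) (e : A) (he : e * e = e)
    (hall : ∀ t ∈ ts, sprod (yield t) = some e) :
    IsFactorization (node ts) :=
  ⟨hne, fun _ => ⟨e, he, hall⟩, isFactorizationList_of_forall hfact⟩

@[simp] lemma yield_node2 (t₁ t₂ : FactTree A) :
    yield (node [t₁, t₂]) = yield t₁ ++ yield t₂ := by simp

@[simp] lemma depth_node2 (t₁ t₂ : FactTree A) :
    depth (node [t₁, t₂]) = max (depth t₁) (depth t₂) + 1 := by simp

end Trees

section Green

variable {M : Type*} [Monoid M]

/-- `x` is R-below `y` -/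
def rle (x y : M) : Prop := ∃ u, x = y * u
/-- `x` is L-below `y` -/
def lle (x y : M) : Prop := ∃ u, x = u * y
/-- `x` is J-below `y` -/
def jle (x y : M) : Prop := ∃ u v, x = u * y * v

def requiv (x y : M) : Prop := rle x y ∧ rle y x
def lequiv (x y : M) : Prop := lle x y ∧ lle y x
def jequiv (x y : M) : Prop := jle x y ∧ jle y x

lemma rle_refl (x : M) : rle x x := ⟨1, by simp⟩
lemma lle_refl (x : M) : lle x x := ⟨1, by simp⟩
lemma jle_refl (x : M) : jle x x := ⟨1, 1, by simp⟩

lemma rle_trans {x y z : M} (h : rle x y) (h' : rle y z) : rle x z := by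
  obtain ⟨u, rfl⟩ := h; obtain ⟨v, rfl⟩ := h'; exact ⟨v * u, by rw [mul_assoc]⟩
lemma lle_trans {x y z : M} (h : lle x y) (h' : lle y z) : lle x z := by
  obtain ⟨u, rfl⟩ := h; obtain ⟨v, rfl⟩ := h'; exact ⟨u * v, by rw [mul_assoc]⟩
lemma jle_trans {x y z : M} (h : jle x y) (h' : jle y z) : jle x z := by
  obtain ⟨u, v, rfl⟩ := h; obtain ⟨a, b, rfl⟩ := h'
  exact ⟨u * a, b * v, by simp only [mul_assoc]⟩

lemma rle.jle {x y : M} (h : rle x y) : jle x y := by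
  obtain ⟨u, rfl⟩ := h; exact ⟨1, u, by simp⟩
lemma lle.jle {x y : M} (h : lle x y) : jle x y := by
  obtain ⟨u, rfl⟩ := h; exact ⟨u, 1, by simp⟩

lemma requiv.jequiv {x y : M} (h : requiv x y) : jequiv x y := ⟨h.1.jle, h.2.jle⟩
lemma lequiv.jequiv {x y : M} (h : lequiv x y) : jequiv x y := ⟨h.1.jle, h.2.jle⟩

lemma jequiv_refl (x : M) : jequiv x x := ⟨jle_refl x, jle_refl x⟩
lemma jequiv.symm {x y : M} (h : jequiv x y) : jequiv y x := ⟨h.2, h.1⟩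
lemma jequiv.trans {x y z : M} (h : jequiv x y) (h' : jequiv y z) : jequiv x z :=
  ⟨jle_trans h.1 h'.1, jle_trans h'.2 h.2⟩
lemma requiv.symm {x y : M} (h : requiv x y) : requiv y x := ⟨h.2, h.1⟩
lemma requiv.trans {x y z : M} (h : requiv x y) (h' : requiv y z) : requiv x z :=
  ⟨rle_trans h.1 h'.1, rle_trans h'.2 h.2⟩
lemma requiv_refl (x : M) : requiv x x := ⟨rle_refl x, rle_refl x⟩
lemma lequiv.symm {x y : M} (h : lequiv x y) : lequiv y x := ⟨h.2, h.1⟩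
lemma lequiv.trans {x y z : M} (h : lequiv x y) (h' : lequiv y z) : lequiv x z :=
  ⟨lle_trans h.1 h'.1, lle_trans h'.2 h.2⟩

lemma jle_mul_left (x y : M) : jle (x * y) y := ⟨x, 1, by simp⟩
lemma jle_mul_right (x y : M) : jle (x * y) x := ⟨1, y, by simp⟩

private lemma idem_pow_aux [Fintype M] (x : M) (a b : ℕ) (hab : a < b) (h : x ^ a = x ^ b) :
    ∃ n, 0 < n ∧ x ^ n * x ^ n = x ^ n := by
  set p := b - a with hp
  have hp0 : 0 < p := by omega
  have hstep : ∀ m, a ≤ m → x ^ (m + p) = x ^ m := by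
    intro m hm
    have h1 : x ^ m = x ^ a * x ^ (m - a) := by rw [← pow_add]; congr 1; omega
    have h2 : x ^ (m + p) = x ^ b * x ^ (m - a) := by rw [← pow_add]; congr 1; omega
    rw [h1, h2, h]
  have hmulti : ∀ k m, a ≤ m → x ^ (m + k * p) = x ^ m := by
    intro k
    induction k with
    | zero => simp
    | succ k ih =>
        intro m hm
        have he : m + (k+1) * p = (m + k * p) + p := by ring
        rw [he, hstep _ (by omega), ih m hm]
  refine ⟨(a + 1) * p, by positivity, ?_⟩
  rw [← pow_add]
  have he : (a+1) * p + (a+1) * p = ((a+1) * p) + (a+1) * p := rfl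
  rw [he, hmulti (a+1) ((a+1)*p) (Nat.le_trans (by omega) (Nat.le_mul_of_pos_right _ hp0))]

/-- idempotent power in a finite monoid -/
lemma exists_idem_pow [Fintype M] (x : M) : ∃ n, 0 < n ∧ x ^ n * x ^ n = x ^ n := by
  obtain ⟨a, b, hab, h⟩ := Finite.exists_ne_map_eq_of_infinite (fun n : ℕ => x ^ n)
  rcases lt_or_gt_of_ne hab with hlt | hlt
  · exact idem_pow_aux x a b hlt h
  · exact idem_pow_aux x b a hlt h.symm

lemma shuffle_pow (u x : M) (k : ℕ) : u * (x * u) ^ k = (u * x) ^ k * u := by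
  induction k with
  | zero => simp
  | succ k ih =>
      calc u * (x * u) ^ (k+1) = u * ((x*u)^k * (x*u)) := by rw [pow_succ]
        _ = (u * (x*u)^k) * (x*u) := by rw [mul_assoc]
        _ = ((u*x)^k * u) * (x*u) := by rw [ih]
        _ = (u*x)^k * (u*x) * u := by simp only [mul_assoc]
        _ = (u*x)^(k+1) * u := by rw [pow_succ]

/-- R-stability in finite monoids -/
lemma rstab [Fintype M] {a b : M} (h1 : rle a b) (h2 : jle b a) : rle b a := by
  obtain ⟨t, rfl⟩ := h1
  obtain ⟨u, v, hb⟩ := h2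
  have hiter : ∀ k, b = u ^ k * b * (t * v) ^ k := by
    intro k
    induction k with
    | zero => simp
    | succ k ih =>
        calc b = u ^ k * b * (t * v) ^ k := ih
          _ = u ^ k * (u * (b * t) * v) * (t * v) ^ k := by rw [← hb]
          _ = (u ^ k * u) * b * ((t * v) * (t * v) ^ k) := by simp only [mul_assoc]
          _ = u ^ (k+1) * b * (t * v) ^ (k+1) := by rw [pow_succ, pow_succ']
  obtain ⟨n, hn, hidem⟩ := exists_idem_pow (t * v)
  have hb2 : b = u ^ n * b * (t * v) ^ n := hiter n
  have hbe : b * (t * v) ^ n = b := by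
    conv_lhs => rw [hb2]
    simp only [mul_assoc]
    rw [hidem]
    simpa only [mul_assoc] using hb2.symm
  obtain ⟨m, rfl⟩ : ∃ m, n = m + 1 := ⟨n - 1, by omega⟩
  refine ⟨v * (t * v) ^ m, ?_⟩
  calc b = b * (t * v) ^ (m + 1) := hbe.symm
    _ = b * ((t * v) * (t * v) ^ m) := by rw [pow_succ']
    _ = (b * t) * (v * (t * v) ^ m) := by simp only [mul_assoc]

/-- L-stability in finite monoids -/
lemma lstab [Fintype M] {a b : M} (h1 : lle a b) (h2 : jle b a) : lle b a := by
  obtain ⟨t, rfl⟩ := h1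
  obtain ⟨u, v, hb⟩ := h2
  have hiter : ∀ k, b = (u * t) ^ k * b * v ^ k := by
    intro k
    induction k with
    | zero => simp
    | succ k ih =>
        calc b = (u * t) ^ k * b * v ^ k := ih
          _ = (u * t) ^ k * (u * (t * b) * v) * v ^ k := by rw [← hb]
          _ = ((u * t) ^ k * (u * t)) * b * (v * v ^ k) := by simp only [mul_assoc]
          _ = (u * t) ^ (k+1) * b * v ^ (k+1) := by rw [pow_succ, pow_succ']
  obtain ⟨n, hn, hidem⟩ := exists_idem_pow (u * t)
  have hb2 : b = (u * t) ^ n * b * v ^ n := hiter n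
  have hbe : (u * t) ^ n * b = b := by
    conv_lhs => rw [hb2]
    simp only [← mul_assoc]
    rw [hidem]
    exact hb2.symm
  obtain ⟨m, rfl⟩ : ∃ m, n = m + 1 := ⟨n - 1, by omega⟩
  refine ⟨(u * t) ^ m * u, ?_⟩
  calc b = (u * t) ^ (m + 1) * b := hbe.symm
    _ = ((u * t) ^ m * (u * t)) * b := by rw [pow_succ]
    _ = ((u * t) ^ m * u) * (t * b) := by simp only [mul_assoc]

lemma middle_left [Fintype M] {p x : M} (h : p * x = p) (hj : jequiv x p) :
    x * x = x ∧ lequiv x p := by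
  have h1 : lle p x := ⟨p, h.symm⟩
  have h2 : lle x p := lstab h1 hj.1
  obtain ⟨u, hu⟩ := h2
  constructor
  · calc x * x = u * p * x := by rw [← hu]
      _ = u * (p * x) := by rw [mul_assoc]
      _ = u * p := by rw [h]
      _ = x := hu.symm
  · exact ⟨⟨u, hu⟩, h1⟩

lemma middle_right [Fintype M] {s x : M} (h : x * s = s) (hj : jequiv x s) :
    requiv x s := by
  have h1 : rle s x := ⟨s, h.symm⟩
  exact ⟨rstab h1 hj.1, h1⟩

lemma idem_eq_of_lr {x y : M} (hx : x * x = x) (hy : y * y = y)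
    (hl : lequiv x y) (hr : requiv x y) : x = y := by
  obtain ⟨⟨c, hc⟩, -⟩ := hl
  obtain ⟨-, ⟨d, hd⟩⟩ := hr
  have h1 : x * y = x := by
    calc x * y = c * y * y := by rw [← hc]
      _ = c * (y * y) := by rw [mul_assoc]
      _ = c * y := by rw [hy]
      _ = x := hc.symm
  have h2 : x * y = y := by
    calc x * y = x * (x * d) := by rw [← hd]
      _ = (x * x) * d := by rw [← mul_assoc]
      _ = x * d := by rw [hx]
      _ = y := hd.symm
  rw [← h1, h2]

lemma middle_eq [Fintype M] {p s x y : M}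
    (hpx : p * x = p) (hxs : x * s = s) (hpy : p * y = p) (hys : y * s = s)
    (hxp : jequiv x p) (hxs' : jequiv x s) (hyp : jequiv y p) (hys' : jequiv y s) :
    x = y := by
  obtain ⟨hxi, hxl⟩ := middle_left hpx hxp
  obtain ⟨hyi, hyl⟩ := middle_left hpy hyp
  have hxr := middle_right hxs hxs'
  have hyr := middle_right hys hys'
  exact idem_eq_of_lr hxi hyi (hxl.trans hyl.symm) (hxr.trans hyr.symm)

/-- a `jle`-maximal element of a nonempty finite set -/
lemma exists_jle_maximal [Fintype M] (T : Finset M) (h : T.Nonempty) :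
    ∃ x₀ ∈ T, ∀ y ∈ T, jle x₀ y → jle y x₀ := by
  classical
  obtain ⟨x₀, hx₀, hmin⟩ := T.exists_min_image
    (fun x => (Finset.univ.filter (fun z => jle x z)).card) h
  refine ⟨x₀, hx₀, fun y hy hxy => ?_⟩
  by_contra hh
  have hsub : (Finset.univ.filter (fun z => jle y z)) ⊂ (Finset.univ.filter (fun z => jle x₀ z)) := by
    constructor
    · intro z hz
      simp only [Finset.mem_filter, Finset.mem_univ, true_and] at hz ⊢
      exact jle_trans hxy hz
    · intro hsub'
      have hx : x₀ ∈ Finset.univ.filter (fun z => jle y z) := by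
        apply hsub'
        simp [jle_refl]
      simp only [Finset.mem_filter, Finset.mem_univ, true_and] at hx
      exact hh hx
  have h1 := Finset.card_lt_card hsub
  have h2 := hmin y hy
  omega

end Green

section Count

variable {M : Type*} [Monoid M] [Fintype M] [DecidableEq M]

attribute [local instance] Classical.propDecidable

/-- the R-class of `s` as a finset -/
noncomputable def rcl (s : M) : Finset M := Finset.univ.filter (fun z => requiv z s)

lemma mem_rcl {z s : M} : z ∈ rcl s ↔ requiv z s := by simp [rcl]

lemma rcl_eq_of_requiv {s s' : M} (h : requiv s s') : rcl s = rcl s' := by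
  ext z
  simp only [mem_rcl]
  exact ⟨fun h' => h'.trans h, fun h' => h'.trans h.symm⟩

lemma rcl_card_le {a b : M} (h : jequiv a b) : (rcl a).card ≤ (rcl b).card := by
  obtain ⟨u, v, ha⟩ := h.1
  obtain ⟨w, hw⟩ : ∃ w, w = u * b := ⟨u * b, rfl⟩
  rw [← hw] at ha
  have haw : rle a w := ⟨v, ha⟩
  have hwb : jle w b := ⟨u, 1, by rw [mul_one, ← hw]⟩
  have hwa : jle w a := jle_trans hwb h.2
  have hreq : requiv a w := ⟨haw, rstab haw hwa⟩
  have hrcl : rcl a = rcl w := rcl_eq_of_requiv hreq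
  have hlwb : lle w b := ⟨u, hw⟩
  have hbw : jle b w := jle_trans h.2 haw.jle
  have hlbw : lle b w := lstab hlwb hbw
  obtain ⟨α, hα⟩ := hlbw
  rw [hrcl]
  apply Finset.card_le_card_of_injOn (fun r => α * r)
  · intro r hr
    rw [Finset.mem_coe, mem_rcl] at hr
    obtain ⟨⟨c, hc⟩, ⟨c', hc'⟩⟩ := hr
    rw [Finset.mem_coe, mem_rcl]
    constructor
    · refine ⟨c, ?_⟩
      show α * r = b * c
      rw [hc, hα, mul_assoc]
    · refine ⟨c', ?_⟩
      show b = α * r * c'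
      rw [hα, hc', mul_assoc]
  · intro r₁ hr₁ r₂ hr₂ heq
    simp only [Finset.mem_coe, mem_rcl] at hr₁ hr₂
    obtain ⟨⟨c₁, hc₁⟩, -⟩ := hr₁
    obtain ⟨⟨c₂, hc₂⟩, -⟩ := hr₂
    have heq' : α * r₁ = α * r₂ := heq
    have key : ∀ r c, r = w * c → u * (α * r) = r := by
      intro r c hrc
      calc u * (α * r) = u * (α * (w * c)) := by rw [hrc]
        _ = u * ((α * w) * c) := by rw [mul_assoc]
        _ = u * (b * c) := by rw [← hα]
        _ = (u * b) * c := by rw [← mul_assoc]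
        _ = r := by rw [← hw, ← hrc]
    calc r₁ = u * (α * r₁) := (key r₁ c₁ hc₁).symm
      _ = u * (α * r₂) := by rw [heq']
      _ = r₂ := key r₂ c₂ hc₂

/-- the eggbox counting lemma: a set of pairs `(p, s)` with `p * s = pi`,
all of them in the J-class of `x₀ ~ pi`, has at most as many elements as
the J-class itself. -/
lemma card_pairs_le_class {P : Finset (M × M)} {pi x₀ : M}
    (hpi : jequiv pi x₀)
    (hP : ∀ pr ∈ P, pr.1 * pr.2 = pi ∧ jequiv pr.1 x₀ ∧ jequiv pr.2 x₀) :
    P.card ≤ (Finset.univ.filter (fun y : M => jequiv y x₀)).card := by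
  classical
  have hsl : ∀ pr ∈ P, lequiv pr.2 pi := by
    intro pr hpr
    obtain ⟨hmul, hp, hs⟩ := hP pr hpr
    have h1 : lle pi pr.2 := ⟨pr.1, hmul.symm⟩
    have h2 : jle pr.2 pi := jle_trans hs.1 hpi.2
    exact ⟨lstab h1 h2, h1⟩
  have hpr1 : ∀ pr ∈ P, requiv pr.1 pi := by
    intro pr hpr
    obtain ⟨hmul, hp, hs⟩ := hP pr hpr
    have h1 : rle pi pr.1 := ⟨pr.2, hmul.symm⟩
    have h2 : jle pr.1 pi := jle_trans hp.1 hpi.2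
    exact ⟨rstab h1 h2, h1⟩
  set t : Finset (Finset M) := P.image (fun pr => rcl pr.2) with ht
  have hcard : P.card = ∑ C ∈ t, (P.filter (fun pr => rcl pr.2 = C)).card := by
    apply Finset.card_eq_sum_card_fiberwise
    intro pr hpr
    exact Finset.mem_image_of_mem _ hpr
  have hfiber : ∀ C ∈ t, (P.filter (fun pr => rcl pr.2 = C)).card ≤ C.card := by
    intro C hC
    obtain ⟨pr₀, hpr₀, hpr₀C⟩ := Finset.mem_image.1 hC
    have hle1 : (P.filter (fun pr => rcl pr.2 = C)).card ≤ (rcl pi).card := by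
      apply Finset.card_le_card_of_injOn (fun pr => pr.1)
      · intro pr hpr
        simp only [Finset.mem_coe, Finset.mem_filter] at hpr
        rw [Finset.mem_coe, mem_rcl]
        exact hpr1 pr hpr.1
      · intro pr hpr pr' hpr' heq
        simp only [Finset.mem_coe, Finset.mem_filter] at hpr hpr'
        replace heq : pr.1 = pr'.1 := heq
        have hrclss : rcl pr.2 = rcl pr'.2 := by rw [hpr.2, hpr'.2]
        have hss : requiv pr.2 pr'.2 := by
          have : pr.2 ∈ rcl pr'.2 := by rw [← hrclss, mem_rcl]; exact requiv_refl _
          rwa [mem_rcl] at this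
        obtain ⟨d, hd⟩ := (hsl pr hpr.1).1
        obtain ⟨c, hc⟩ := hss.symm.1
        have hpis : pi * c = pi := by
          calc pi * c = (pr.1 * pr.2) * c := by rw [(hP pr hpr.1).1]
            _ = pr.1 * (pr.2 * c) := by rw [mul_assoc]
            _ = pr.1 * pr'.2 := by rw [← hc]
            _ = pr'.1 * pr'.2 := by rw [heq]
            _ = pi := (hP pr' hpr'.1).1
        have hs2 : pr'.2 = pr.2 := by
          rw [hc, hd, mul_assoc, hpis]
        exact Prod.ext heq hs2.symm
    have hle2 : (rcl pi).card ≤ C.card := by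
      rw [← hpr₀C]
      apply rcl_card_le
      exact hpi.trans ((hP pr₀ hpr₀).2.2).symm
    omega
  have hdisj : ∀ C ∈ t, ∀ C' ∈ t, C ≠ C' → Disjoint C C' := by
    intro C hC C' hC' hne
    obtain ⟨pr, hpr, hprC⟩ := Finset.mem_image.1 hC
    obtain ⟨pr', hpr', hprC'⟩ := Finset.mem_image.1 hC'
    rw [Finset.disjoint_left]
    intro z hz hz'
    rw [← hprC, mem_rcl] at hz
    rw [← hprC', mem_rcl] at hz'
    exact hne (by rw [← hprC, ← hprC']; exact rcl_eq_of_requiv (hz.symm.trans hz'))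
  have hsum : ∑ C ∈ t, C.card = (t.biUnion id).card := (Finset.card_biUnion hdisj).symm
  have hsub : t.biUnion id ⊆ Finset.univ.filter (fun y : M => jequiv y x₀) := by
    intro z hz
    obtain ⟨C, hC, hzC⟩ := Finset.mem_biUnion.1 hz
    obtain ⟨pr, hpr, hprC⟩ := Finset.mem_image.1 hC
    simp only [id] at hzC
    rw [← hprC, mem_rcl] at hzC
    simp only [Finset.mem_filter, Finset.mem_univ, true_and]
    exact hzC.jequiv.trans ((hP pr hpr).2.2)
  calc P.card = ∑ C ∈ t, (P.filter (fun pr => rcl pr.2 = C)).card := hcard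
    _ ≤ ∑ C ∈ t, C.card := Finset.sum_le_sum hfiber
    _ = (t.biUnion id).card := hsum
    _ ≤ _ := Finset.card_le_card hsub

end Count

section Smooth

variable {A : Type*} [Semigroup A] [Fintype A]

attribute [local instance] Classical.propDecidable

noncomputable instance : Fintype (WithOne A) := inferInstanceAs (Fintype (Option A))

lemma yieldList_ne_nil {ts : List (FactTree A)} (h : ts ≠ [])
    (hit : ∀ t ∈ ts, yield t ≠ []) : yieldList ts ≠ [] := by
  cases ts with
  | nil => exact absurd rfl h
  | cons t ts =>
      simp only [yieldList_cons]
      intro hcontra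
      exact hit t (by simp) (List.append_eq_nil_iff.1 hcontra).1

lemma mv_eq_coe {ts : List (FactTree A)} (h : ts ≠ []) (hit : ∀ t ∈ ts, yield t ≠ []) :
    ∃ x : A, sprod (yieldList ts) = some x ∧ mv ts = (x : WithOne A) :=
  sprod_eq_mval (yieldList_ne_nil h hit)

lemma app_ne_left {X : Type*} {l l' : List X} (h : l ≠ []) : l ++ l' ≠ [] := by
  intro hc; exact h (List.append_eq_nil_iff.1 hc).1

lemma app_ne_right {X : Type*} {l l' : List X} (h : l' ≠ []) : l ++ l' ≠ [] := by
  intro hc; exact h (List.append_eq_nil_iff.1 hc).2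

/-- the finset of (prefix, suffix) context pairs at interior gaps -/
noncomputable def Pairs (α β : WithOne A) (ts : List (FactTree A)) :
    Finset (WithOne A × WithOne A) :=
  (Finset.range (ts.length - 1)).image
    (fun t => (α * mv (ts.take (t+1)), mv (ts.drop (t+1)) * β))

lemma mem_Pairs {α β : WithOne A} {ts xs ys : List (FactTree A)}
    (h : ts = xs ++ ys) (hxs : xs ≠ []) (hys : ys ≠ []) :
    (α * mv xs, mv ys * β) ∈ Pairs α β ts := by
  have hx1 : 1 ≤ xs.length := List.length_pos_iff.2 hxs
  have hy1 : 1 ≤ ys.length := List.length_pos_iff.2 hys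
  have hlen : ts.length = xs.length + ys.length := by rw [h, List.length_append]
  apply Finset.mem_image.2
  refine ⟨xs.length - 1, ?_, ?_⟩
  · rw [Finset.mem_range]; omega
  · have he : xs.length - 1 + 1 = xs.length := by omega
    rw [he, h, List.take_left, List.drop_left]

lemma mem_Pairs_elim {α β : WithOne A} {ts : List (FactTree A)}
    {pr : WithOne A × WithOne A} (h : pr ∈ Pairs α β ts) :
    ∃ xs ys, ts = xs ++ ys ∧ xs ≠ [] ∧ ys ≠ [] ∧ pr = (α * mv xs, mv ys * β) := by
  obtain ⟨t, ht, hpr⟩ := Finset.mem_image.1 h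
  rw [Finset.mem_range] at ht
  refine ⟨ts.take (t+1), ts.drop (t+1), (List.take_append_drop _ _).symm, ?_, ?_, hpr.symm⟩
  · have : (ts.take (t+1)).length = t + 1 := by
      rw [List.length_take]; omega
    intro hc; rw [hc] at this; simp at this
  · have : (ts.drop (t+1)).length = ts.length - (t+1) := by rw [List.length_drop]
    intro hc; rw [hc] at this; simp at this; omega

/-- smooth-word hypotheses -/
structure Hyp (x₀ α β : WithOne A) (ts : List (FactTree A)) : Prop where
  fac : ∀ xs ys zs, ts = xs ++ ys ++ zs → ys ≠ [] → jequiv (mv ys) x₀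
  pre : ∀ xs ys, ts = xs ++ ys → xs ≠ [] → jequiv (α * mv xs) x₀
  suf : ∀ xs ys, ts = xs ++ ys → ys ≠ [] → jequiv (mv ys * β) x₀
  items : ∀ t ∈ ts, IsFactorization t ∧ yield t ≠ []

lemma Hyp.piece {x₀ α β : WithOne A} {ts : List (FactTree A)} (H : Hyp x₀ α β ts)
    {xs ys zs : List (FactTree A)} (h : ts = xs ++ ys ++ zs) (hys : ys ≠ []) :
    Hyp x₀ (α * mv xs) (mv zs * β) ys := by
  constructor
  · intro as bs cs habc hbs
    exact H.fac (xs ++ as) bs (cs ++ zs)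
      (by rw [h, habc]; simp [List.append_assoc]) hbs
  · intro as bs hab has
    have h1 : (α * mv xs) * mv as = α * mv (xs ++ as) := by
      rw [mv_append, mul_assoc]
    rw [h1]
    exact H.pre (xs ++ as) (bs ++ zs)
      (by rw [h, hab]; simp [List.append_assoc])
      (app_ne_right has)
  · intro as bs hab hbs
    have h1 : mv bs * (mv zs * β) = mv (bs ++ zs) * β := by
      rw [mv_append, mul_assoc]
    rw [h1]
    exact H.suf (xs ++ as) (bs ++ zs)
      (by rw [h, hab]; simp [List.append_assoc])
      (app_ne_left hbs)
  · intro t htm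
    exact H.items t (by rw [h]; simp; tauto)

lemma Pairs_piece {α β : WithOne A} {ts xs ys zs : List (FactTree A)}
    (h : ts = xs ++ ys ++ zs) :
    Pairs (α * mv xs) (mv zs * β) ys ⊆ Pairs α β ts := by
  intro pr hpr
  obtain ⟨as, bs, hab, has, hbs, rfl⟩ := mem_Pairs_elim hpr
  have h1 : (α * mv xs) * mv as = α * mv (xs ++ as) := by rw [mv_append, mul_assoc]
  have h2 : mv bs * (mv zs * β) = mv (bs ++ zs) * β := by rw [mv_append, mul_assoc]
  rw [h1, h2]
  exact mem_Pairs (by rw [h, hab]; simp [List.append_assoc])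
    (app_ne_right has) (app_ne_left hbs)

/-- the count bound: number of interior pairs is at most the size of the J-class. -/
lemma Pairs_card_le {x₀ α β : WithOne A} {ts : List (FactTree A)}
    (H : Hyp x₀ α β ts) (hall : jequiv (α * mv ts * β) x₀) :
    (Pairs α β ts).card ≤ (Finset.univ.filter (fun y : WithOne A => jequiv y x₀)).card := by
  classical
  apply card_pairs_le_class (pi := α * mv ts * β) hall
  intro pr hpr
  obtain ⟨xs, ys, hsplit, hxs, hys, rfl⟩ := mem_Pairs_elim hpr
  refine ⟨?_, H.pre xs ys hsplit hxs, H.suf xs ys hsplit hys⟩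
  show (α * mv xs) * (mv ys * β) = α * mv ts * β
  rw [hsplit, mv_append]
  simp only [mul_assoc]

end Smooth

section SmoothMain

variable {A : Type*} [Semigroup A] [Fintype A]

attribute [local instance] Classical.propDecidable

lemma C2base (junk : Option (FactTree A)) (hjunk : ∀ j ∈ junk, IsFactorization j)
    (t : FactTree A) (hfac : IsFactorization t) :
    ∃ Tr : FactTree A, IsFactorization Tr ∧
      yield Tr = (junk.elim [] yield) ++ yield t ∧
      depth Tr ≤ junk.elim (depth t) (fun j => 1 + max (depth j) (depth t)) := by
  cases junk with
  | none => exact ⟨t, hfac, by simp, le_refl _⟩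
  | some j =>
      refine ⟨FactTree.node [j, t], isFactorization_node2 (hjunk j rfl) hfac, by simp, ?_⟩
      simp only [depth_node2, Option.elim]
      omega

theorem C2 (k : ℕ) :
    ∀ (x₀ α β : WithOne A) (junk : Option (FactTree A)) (ts : List (FactTree A)),
      ts ≠ [] →
      (∀ j ∈ junk, IsFactorization j) →
      (Pairs α β ts).card ≤ k →
      Hyp x₀ α β ts →
      ∃ Tr : FactTree A, IsFactorization Tr ∧
        yield Tr = (junk.elim [] yield) ++ yieldList ts ∧
        depth Tr ≤ junk.elim (3 * k + depthList ts)
          (fun j => max (3 * k + depthList ts) (3 + max (depth j) (depthList ts))) := by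
  induction k with
  | zero =>
      intro x₀ α β junk ts hts hjunk hk H
      have hlen : ts.length ≤ 1 := by
        by_contra hlen
        push_neg at hlen
        obtain ⟨t₁, rest, rfl⟩ : ∃ t₁ rest, ts = t₁ :: rest := by
          cases ts with
          | nil => exact absurd rfl hts
          | cons a l => exact ⟨a, l, rfl⟩
        have hrest : rest ≠ [] := by
          intro hc; rw [hc] at hlen; simp at hlen
        have hmem := mem_Pairs (α := α) (β := β) (ts := t₁ :: rest) (xs := [t₁]) (ys := rest) rfl (by simp) hrest
        have hzero : (Pairs α β (t₁ :: rest)).card = 0 := Nat.le_zero.1 hk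
        rw [Finset.card_eq_zero] at hzero
        rw [hzero] at hmem
        simp at hmem
      obtain ⟨t, rfl⟩ : ∃ t, ts = [t] := by
        cases ts with
        | nil => exact absurd rfl hts
        | cons a l =>
            cases l with
            | nil => exact ⟨a, rfl⟩
            | cons b l' => simp at hlen
      obtain ⟨Tr, h1, h2, h3⟩ := C2base junk hjunk t (H.items t (by simp)).1
      refine ⟨Tr, h1, by simpa using h2, ?_⟩
      cases junk with
      | none => simp only [Option.elim] at h3 ⊢; simp only [depthList_cons, depthList_nil]; omega
      | some j => simp only [Option.elim] at h3 ⊢; simp only [depthList_cons, depthList_nil]; omega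
  | succ k ih =>
      intro x₀ α β junk ts hts hjunk hk H
      obtain ⟨t₁, rest, rfl⟩ : ∃ t₁ rest, ts = t₁ :: rest := by
        cases ts with
        | nil => exact absurd rfl hts
        | cons a l => exact ⟨a, l, rfl⟩
      by_cases hrest : rest = []
      · subst hrest
        obtain ⟨Tr, h1, h2, h3⟩ := C2base junk hjunk t₁ (H.items t₁ (by simp)).1
        refine ⟨Tr, h1, by simpa using h2, ?_⟩
        cases junk with
        | none => simp only [Option.elim] at h3 ⊢; simp only [depthList_cons, depthList_nil]; omega
        | some j => simp only [Option.elim] at h3 ⊢; simp only [depthList_cons, depthList_nil]; omega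
      · obtain ⟨p, hp⟩ : ∃ p, p = α * mv [t₁] := ⟨_, rfl⟩
        obtain ⟨s, hs⟩ : ∃ s, s = mv rest * β := ⟨_, rfl⟩
        have hsplit1 : t₁ :: rest = [t₁] ++ rest := rfl
        have hps_mem : (p, s) ∈ Pairs α β (t₁ :: rest) := by
          rw [hp, hs]
          exact mem_Pairs hsplit1 (by simp) hrest
        have hpx : jequiv p x₀ := by rw [hp]; exact H.pre [t₁] rest hsplit1 (by simp)
        have hsx : jequiv s x₀ := by rw [hs]; exact H.suf [t₁] rest hsplit1 hrest
        have herase : ((Pairs α β (t₁ :: rest)).erase (p, s)).card ≤ k := by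
          have h1 := Finset.card_erase_of_mem hps_mem
          omega
        have hB : depth t₁ ≤ depthList (t₁ :: rest) := depth_le_depthList (by simp)
        -- the splitting process
        have SPLIT : ∀ (n : ℕ) (pref cur : List (FactTree A)), cur.length ≤ n → cur ≠ [] →
            t₁ :: rest = pref ++ cur → pref ≠ [] → α * mv pref = p → mv cur * β = s →
            ∃ (cs : List (FactTree A)) (vt : FactTree A),
              IsFactorization vt ∧
              yieldList cs ++ yield vt = yieldList cur ∧
              depth vt ≤ 3 * k + depthList (t₁ :: rest) ∧
              (∀ c ∈ cs, IsFactorization c ∧ depth c ≤ 3 * k + depthList (t₁ :: rest) ∧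
                ∃ x : A, sprod (yield c) = some x ∧ p * (x : WithOne A) = p ∧
                  (x : WithOne A) * s = s ∧ jequiv (x : WithOne A) x₀) := by
          intro n
          induction n with
          | zero =>
              intro pref cur hlen hcur _ _ _ _
              exact absurd (List.length_eq_zero_iff.1 (Nat.le_zero.1 hlen)) hcur
          | succ n ihn =>
              intro pref cur hlen hcur hsplit hpref hpeq hseq
              obtain ⟨Occ, hOcc⟩ : ∃ Occ : Finset ℕ, Occ = (Finset.range cur.length).filter
                  (fun m => 0 < m ∧ p * mv (cur.take m) = p ∧ mv (cur.drop m) * β = s) :=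
                ⟨_, rfl⟩
              have hmemOcc : ∀ m, m ∈ Occ ↔ (m < cur.length ∧ 0 < m ∧
                  p * mv (cur.take m) = p ∧ mv (cur.drop m) * β = s) := by
                intro m
                rw [hOcc, Finset.mem_filter, Finset.mem_range]
              have hsubcur : ∀ t ∈ cur, t ∈ t₁ :: rest := by
                intro t htmem
                rw [hsplit]
                exact List.mem_append_right _ htmem
              by_cases hne : Occ.Nonempty
              · obtain ⟨m₀, hm₀⟩ : ∃ m₀, m₀ = Occ.min' hne := ⟨_, rfl⟩
                have hm₀mem : m₀ ∈ Occ := by rw [hm₀]; exact Occ.min'_mem hne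
                rw [hmemOcc] at hm₀mem
                obtain ⟨hm₀lt, hm₀pos, hm₀p, hm₀s⟩ := hm₀mem
                obtain ⟨mid, hmid⟩ : ∃ mid, mid = cur.take m₀ := ⟨_, rfl⟩
                obtain ⟨rest', hrest'⟩ : ∃ r, r = cur.drop m₀ := ⟨_, rfl⟩
                have hcur_eq : cur = mid ++ rest' := by
                  rw [hmid, hrest', List.take_append_drop]
                have hmidlen : mid.length = m₀ := by
                  rw [hmid, List.length_take]; omega
                have hmid_ne : mid ≠ [] := by
                  intro hc; rw [hc] at hmidlen; simp at hmidlen; omega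
                have hrest'_ne : rest' ≠ [] := by
                  have hl : rest'.length = cur.length - m₀ := by rw [hrest', List.length_drop]
                  intro hc; rw [hc] at hl; simp at hl; omega
                rw [← hmid] at hm₀p
                rw [← hrest'] at hm₀s
                have hts_split : t₁ :: rest = pref ++ mid ++ rest' := by
                  rw [hsplit, hcur_eq, List.append_assoc]
                have Hmid0 := H.piece hts_split hmid_ne
                rw [hpeq] at Hmid0
                have hmidsub : ∀ t ∈ mid, t ∈ t₁ :: rest := by
                  intro t htmem
                  exact hsubcur t (by rw [hcur_eq]; exact List.mem_append_left _ htmem)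
                have hmidpairs : Pairs p (mv rest' * β) mid ⊆
                    (Pairs α β (t₁ :: rest)).erase (p, s) := by
                  intro pr hpr
                  rw [Finset.mem_erase]
                  constructor
                  · obtain ⟨as, bs, habs, has, hbs, rfl⟩ := mem_Pairs_elim hpr
                    intro hcontra
                    have h1 : p * mv as = p := congrArg Prod.fst hcontra
                    have h2 : mv bs * (mv rest' * β) = s := congrArg Prod.snd hcontra
                    have hmlen : as.length < m₀ := by
                      have : m₀ = as.length + bs.length := by
                        rw [← hmidlen, habs, List.length_append]
                      have : 0 < bs.length := List.length_pos_iff.2 hbs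
                      omega
                    have hcur_as : cur = as ++ (bs ++ rest') := by
                      rw [hcur_eq, habs, List.append_assoc]
                    have htake : cur.take as.length = as := by
                      rw [hcur_as, List.take_left]
                    have hdrop : cur.drop as.length = bs ++ rest' := by
                      rw [hcur_as, List.drop_left]
                    have hmemo : as.length ∈ Occ := by
                      rw [hmemOcc]
                      refine ⟨by omega, List.length_pos_iff.2 has, ?_, ?_⟩
                      · rw [htake]; exact h1
                      · rw [hdrop, mv_append, mul_assoc]; exact h2
                    have := Occ.min'_le _ hmemo
                    omega
                  · have hsub := Pairs_piece (α := α) (β := β) hts_split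
                    rw [hpeq] at hsub
                    exact hsub hpr
                have hcard_mid : (Pairs p (mv rest' * β) mid).card ≤ k :=
                  le_trans (Finset.card_le_card hmidpairs) herase
                obtain ⟨c₀, hc₀fac, hc₀yield, hc₀depth⟩ :=
                  ih x₀ p (mv rest' * β) none mid hmid_ne (by simp) hcard_mid Hmid0
                simp only [Option.elim, List.nil_append] at hc₀yield hc₀depth
                have hc₀depth' : depth c₀ ≤ 3 * k + depthList (t₁ :: rest) := by
                  have := depthList_subset hmidsub
                  omega
                obtain ⟨x, hx_sprod, hx_mv⟩ :=
                  mv_eq_coe hmid_ne (fun t htm => (Hmid0.items t htm).2)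
                have hpxp : p * (x : WithOne A) = p := by rw [← hx_mv]; exact hm₀p
                have hxss : (x : WithOne A) * s = s := by
                  rw [← hx_mv]
                  calc mv mid * s = mv mid * (mv rest' * β) := by rw [hm₀s]
                    _ = mv cur * β := by rw [hcur_eq, mv_append, mul_assoc]
                    _ = s := hseq

                have hxj : jequiv (x : WithOne A) x₀ := by
                  rw [← hx_mv]
                  exact H.fac pref mid rest' hts_split hmid_ne
                obtain ⟨cs', vt, hvtfac, hyields, hvtd, hcs'⟩ :=
                  ihn (pref ++ mid) rest'
                    (by
                      have h1 : cur.length = mid.length + rest'.length := by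
                        rw [hcur_eq, List.length_append]
                      omega)
                    hrest'_ne
                    hts_split
                    (app_ne_left hpref)
                    (by rw [mv_append, ← mul_assoc, hpeq, hm₀p])
                    hm₀s
                refine ⟨c₀ :: cs', vt, hvtfac, ?_, hvtd, ?_⟩
                · rw [yieldList_cons, hc₀yield, List.append_assoc, hyields, hcur_eq,
                    yieldList_append]
                · intro c hc
                  rcases List.mem_cons.1 hc with rfl | hc
                  · refine ⟨hc₀fac, hc₀depth', x, ?_, hpxp, hxss, hxj⟩
                    rw [hc₀yield]; exact hx_sprod
                  · exact hcs' c hc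
              · -- no further occurrence: the terminal piece
                have hv_split : t₁ :: rest = pref ++ cur ++ [] := by
                  rw [hsplit]; simp
                have Hv := H.piece hv_split hcur
                rw [hpeq, mv_nil, one_mul] at Hv
                have hvpairs : Pairs p β cur ⊆ (Pairs α β (t₁ :: rest)).erase (p, s) := by
                  intro pr hpr
                  rw [Finset.mem_erase]
                  constructor
                  · obtain ⟨as, bs, habs, has, hbs, rfl⟩ := mem_Pairs_elim hpr
                    intro hcontra
                    have h1 : p * mv as = p := congrArg Prod.fst hcontra
                    have h2 : mv bs * β = s := congrArg Prod.snd hcontra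
                    have htake : cur.take as.length = as := by rw [habs, List.take_left]
                    have hdrop : cur.drop as.length = bs := by rw [habs, List.drop_left]
                    have hmemo : as.length ∈ Occ := by
                      rw [hmemOcc]
                      refine ⟨?_, List.length_pos_iff.2 has, by rw [htake]; exact h1,
                        by rw [hdrop]; exact h2⟩
                      rw [habs, List.length_append]
                      have : 0 < bs.length := List.length_pos_iff.2 hbs
                      omega
                    exact hne ⟨_, hmemo⟩
                  · have hsub := Pairs_piece (α := α) (β := β) hv_split
                    rw [hpeq, mv_nil, one_mul] at hsub
                    exact hsub hpr
                have hcard_v : (Pairs p β cur).card ≤ k :=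
                  le_trans (Finset.card_le_card hvpairs) herase
                obtain ⟨vt, hvtfac, hvtyield, hvtd⟩ :=
                  ih x₀ p β none cur hcur (by simp) hcard_v Hv
                simp only [Option.elim, List.nil_append] at hvtyield hvtd
                refine ⟨[], vt, hvtfac, by simpa using hvtyield, ?_, by simp⟩
                have := depthList_subset hsubcur
                omega
        -- apply SPLIT
        obtain ⟨cs, vt, hvtfac, hyields, hvtd, hcs⟩ :=
          SPLIT rest.length [t₁] rest (le_refl _) hrest rfl (by simp) hp.symm hs.symm
        obtain ⟨u₀, hu₀fac, hu₀yield, hu₀d⟩ :=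
          C2base junk hjunk t₁ (H.items t₁ (by simp)).1
        cases cs with
        | nil =>
            refine ⟨FactTree.node [u₀, vt], isFactorization_node2 hu₀fac hvtfac, ?_, ?_⟩
            · rw [yield_node2, hu₀yield]
              simp only [yieldList_nil, List.nil_append] at hyields
              simp only [yieldList_cons, List.append_assoc, hyields]
            · rw [depth_node2]
              cases junk with
              | none =>
                  simp only [Option.elim] at hu₀d ⊢
                  omega
              | some j =>
                  simp only [Option.elim] at hu₀d ⊢
                  omega
        | cons c cs' =>
            obtain ⟨hcfac, hcd, x, hxsprod, hxp, hxs2, hxj⟩ := hcs c (by simp)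
            have hxidem : x * x = x := by
              have h1 : jequiv (x : WithOne A) p := hxj.trans hpx.symm
              obtain ⟨hidem, -⟩ := middle_left hxp h1
              have : ((x * x : A) : WithOne A) = ((x : A) : WithOne A) := by
                rw [WithOne.coe_mul]; exact hidem
              exact_mod_cast this
            have hallx : ∀ c' ∈ c :: cs', sprod (yield c') = some x := by
              intro c' hc'
              obtain ⟨hc'fac, hc'd, x', hx'sprod, hx'p, hx's, hx'j⟩ := hcs c' hc'
              have hx'x : (x' : WithOne A) = (x : WithOne A) := by
                apply middle_eq hx'p hx's hxp hxs2
                · exact hx'j.trans hpx.symm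
                · exact hx'j.trans hsx.symm
                · exact hxj.trans hpx.symm
                · exact hxj.trans hsx.symm
              rw [hx'sprod]
              congr 1
              exact_mod_cast hx'x
            obtain ⟨E, hE⟩ : ∃ E, E = FactTree.node (c :: cs') := ⟨_, rfl⟩
            have hEfac : IsFactorization E := by
              rw [hE]
              exact isFactorization_nodeE (by simp)
                (fun t htm => (hcs t htm).1) x hxidem hallx
            have hEdepth : depth E ≤ 3 * k + depthList (t₁ :: rest) + 1 := by
              rw [hE, depth_node]
              have : depthList (c :: cs') ≤ 3 * k + depthList (t₁ :: rest) :=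
                depthList_le (fun t htm => (hcs t htm).2.1)
              omega
            have hEyield : yield E = yieldList (c :: cs') := by rw [hE, yield_node]
            refine ⟨FactTree.node [FactTree.node [u₀, E], vt],
              isFactorization_node2 (isFactorization_node2 hu₀fac hEfac) hvtfac, ?_, ?_⟩
            · rw [yield_node2, yield_node2, hu₀yield, hEyield]
              have h' := hyields
              simp only [yieldList_cons, List.append_assoc] at h'
              simp only [yieldList_cons, List.append_assoc, h']
            · rw [depth_node2, depth_node2]
              cases junk with
              | none =>
                  simp only [Option.elim] at hu₀d ⊢
                  omega
              | some j =>
                  simp only [Option.elim] at hu₀d ⊢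
                  omega

end SmoothMain

section Ideal

variable {A : Type*} [Semigroup A] [Fintype A]

attribute [local instance] Classical.propDecidable

lemma withone_mul_eq_one {a b : WithOne A} (h : a * b = 1) : a = 1 ∧ b = 1 := by
  induction a using WithOne.recOneCoe with
  | one => simpa using h
  | coe x =>
      induction b using WithOne.recOneCoe with
      | one => simp at h
      | coe y => rw [← WithOne.coe_mul] at h; exact absurd h WithOne.coe_ne_one

lemma eq_one_of_jle_one {x : WithOne A} (h : jle (1 : WithOne A) x) : x = 1 := by
  obtain ⟨u, v, huv⟩ := h
  obtain ⟨h1, h2⟩ := withone_mul_eq_one huv.symm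
  exact (withone_mul_eq_one h1).2

/-- map blocks to lists -/
def blk (cb : FactTree A × List (FactTree A)) : List (FactTree A) := cb.1 :: cb.2

lemma blk_ne (cb : FactTree A × List (FactTree A)) : blk cb ≠ [] := by simp [blk]

/-- greedy right-to-left decomposition of a word into a leading good block and
(letter, good block) pairs whose combined value has fallen out of the top class. -/
lemma greedy (x₀ : WithOne A) :
    ∀ (n : ℕ) (cur : List (FactTree A)), cur.length ≤ n →
    ∃ (b0 : List (FactTree A)) (L : List (FactTree A × List (FactTree A))),
      cur = b0 ++ (L.map blk).flatten ∧
      (b0 = [] ∨ jequiv (mv b0) x₀) ∧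
      (∀ cb ∈ L, ¬ jequiv (mv (blk cb)) x₀ ∧ (cb.2 = [] ∨ jequiv (mv cb.2) x₀)) := by
  intro n
  induction n with
  | zero =>
      intro cur hlen
      have : cur = [] := List.length_eq_zero_iff.1 (Nat.le_zero.1 hlen)
      exact ⟨[], [], by simp [this], Or.inl rfl, by simp⟩
  | succ n ihn =>
      intro cur hlen
      rcases eq_or_ne cur [] with rfl | hcur
      · exact ⟨[], [], by simp, Or.inl rfl, by simp⟩
      obtain ⟨VS, hVS⟩ : ∃ VS : Finset ℕ, VS = (Finset.range (cur.length + 1)).filter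
          (fun j => j = 0 ∨ jequiv (mv (cur.drop (cur.length - j))) x₀) := ⟨_, rfl⟩
      have hmemVS : ∀ j, j ∈ VS ↔ (j < cur.length + 1 ∧
          (j = 0 ∨ jequiv (mv (cur.drop (cur.length - j))) x₀)) := by
        intro j; rw [hVS, Finset.mem_filter, Finset.mem_range]
      have hVSne : VS.Nonempty := ⟨0, by rw [hmemVS]; exact ⟨by omega, Or.inl rfl⟩⟩
      obtain ⟨j₀, hj₀⟩ : ∃ j₀, j₀ = VS.max' hVSne := ⟨_, rfl⟩
      have hj₀mem : j₀ ∈ VS := by rw [hj₀]; exact VS.max'_mem hVSne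
      rw [hmemVS] at hj₀mem
      obtain ⟨hj₀lt, hj₀val⟩ := hj₀mem
      rcases eq_or_ne j₀ cur.length with hj₀len | hj₀len
      · -- whole word is a good block
        refine ⟨cur, [], by simp, ?_, by simp⟩
        right
        rcases hj₀val with h0 | hval
        · exfalso; rw [h0] at hj₀len; exact hcur (List.length_eq_zero_iff.1 hj₀len.symm)
        · rw [hj₀len] at hval; simpa using hval
      · have hj₀lt' : j₀ < cur.length := by omega
        obtain ⟨i, hi⟩ : ∃ i, i = cur.length - j₀ - 1 := ⟨_, rfl⟩
        have hilt : i < cur.length := by omega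
        obtain ⟨b, hb⟩ : ∃ b, b = cur.drop (i + 1) := ⟨_, rfl⟩
        obtain ⟨front, hfront⟩ : ∃ f, f = cur.take i := ⟨_, rfl⟩
        obtain ⟨c, hc⟩ : ∃ c, c = cur[i]'hilt := ⟨_, rfl⟩
        have hdrop_i : cur.drop i = c :: b := by
          rw [hb, hc]; exact List.drop_eq_getElem_cons hilt
        have hcur_eq : cur = front ++ (c :: b) := by
          rw [hfront, ← hdrop_i, List.take_append_drop]
        have hblock_bad : ¬ jequiv (mv (c :: b)) x₀ := by
          intro hcontra
          have hmem : j₀ + 1 ∈ VS := by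
            rw [hmemVS]
            refine ⟨by omega, Or.inr ?_⟩
            have : cur.length - (j₀ + 1) = i := by omega
            rw [this, hdrop_i]
            exact hcontra
          have := VS.le_max' _ hmem
          omega
        have hb_good : b = [] ∨ jequiv (mv b) x₀ := by
          rcases hj₀val with h0 | hval
          · left
            have : cur.length - j₀ = cur.length := by omega
            have hlb : b.length = j₀ := by rw [hb, List.length_drop]; omega
            rw [h0] at hlb
            exact List.length_eq_zero_iff.1 hlb
          · right
            have : cur.length - j₀ = i + 1 := by omega
            rw [this, ← hb] at hval
            exact hval
        have hfrontlen : front.length ≤ n := by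
          rw [hfront, List.length_take]; omega
        obtain ⟨b0, L', hjoin, hb0, hL'⟩ := ihn front hfrontlen
        refine ⟨b0, L' ++ [(c, b)], ?_, hb0, ?_⟩
        · rw [hcur_eq, hjoin]
          simp [blk, List.append_assoc]
        · intro cb hcb
          rcases List.mem_append.1 hcb with hcb | hcb
          · exact hL' cb hcb
          · simp only [List.mem_singleton] at hcb
            subst hcb
            exact ⟨hblock_bad, hb_good⟩

lemma forall₂_append_split {X Y : Type*} {R : X → Y → Prop} :
    ∀ {as : List Y} {L : List X} {ds bs : List Y}, List.Forall₂ R L ds → ds = as ++ bs →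
    ∃ aL bL, L = aL ++ bL ∧ List.Forall₂ R aL as ∧ List.Forall₂ R bL bs := by
  intro as
  induction as with
  | nil =>
      intro L ds bs h hds
      exact ⟨[], L, rfl, List.Forall₂.nil, by rwa [hds, List.nil_append] at h⟩
  | cons a as ih =>
      intro L ds bs h hds
      subst hds
      cases h with
      | cons hR hF =>
          obtain ⟨aL, bL, rfl, h1, h2⟩ := ih hF rfl
          exact ⟨_ :: aL, bL, rfl, List.Forall₂.cons hR h1, h2⟩

lemma forall₂_yieldList {L : List (FactTree A × List (FactTree A))} {ds : List (FactTree A)}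
    (h : List.Forall₂ (fun cb d => yield d = yieldList (blk cb)) L ds) :
    yieldList ds = yieldList ((L.map blk).flatten) := by
  induction h with
  | nil => simp
  | cons hR hF ih =>
      simp only [List.map_cons, List.flatten_cons, yieldList_append, yieldList_cons, ih, hR]

lemma mv_yield_eq {xs ys : List (FactTree A)} (h : yieldList xs = yieldList ys) :
    mv xs = mv ys := by
  unfold mv; rw [h]

end Ideal

section Emain

variable {A : Type*} [Semigroup A] [Fintype A]

attribute [local instance] Classical.propDecidable

theorem Ethm : ∀ (N : ℕ) (T : Finset (WithOne A)),
    T.card ≤ N →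
    (∀ x ∈ T, ∀ y, jequiv y x → y ∈ T) →
    (1 : WithOne A) ∉ T →
    ∀ (ts : List (FactTree A)), ts ≠ [] →
    (∀ xs ys zs, ts = xs ++ ys ++ zs → ys ≠ [] → mv ys ∈ T) →
    (∀ t ∈ ts, IsFactorization t ∧ yield t ≠ []) →
    ∀ (junk : Option (FactTree A)), (∀ j ∈ junk, IsFactorization j) →
    ∃ Tr : FactTree A, IsFactorization Tr ∧
      yield Tr = (junk.elim [] yield) ++ yieldList ts ∧
      depth Tr ≤ junk.elim (3 * T.card + depthList ts)
        (fun j => max (3 * T.card + depthList ts) (3 * T.card - 1 + depth j)) := by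
  intro N
  induction N with
  | zero =>
      intro T hcard hsat hone ts hts hfacT hitems junk hjunk
      exfalso
      have h1 : mv ts ∈ T := hfacT [] ts [] (by simp) hts
      have h2 := Finset.card_pos.2 ⟨_, h1⟩
      omega
  | succ N ihN =>
      intro T hcard hsat hone ts hts hfacT hitems junk hjunk
      have hTne : T.Nonempty := ⟨mv ts, hfacT [] ts [] (by simp) hts⟩
      obtain ⟨x₀, hx₀T, hx₀max⟩ := exists_jle_maximal T hTne
      have hJclT : ∀ y : WithOne A, jequiv y x₀ → y ∈ T := fun y hy => hsat x₀ hx₀T y hy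
      obtain ⟨J0, hJ0⟩ : ∃ J0 : Finset (WithOne A), J0 = T.filter (fun y => jequiv y x₀) :=
        ⟨_, rfl⟩
      have hJ0card : 1 ≤ J0.card := by
        have hm : x₀ ∈ J0 := by rw [hJ0]; exact Finset.mem_filter.2 ⟨hx₀T, jequiv_refl x₀⟩
        exact Finset.card_pos.2 ⟨_, hm⟩
      have hJcl_eq : (Finset.univ.filter (fun y : WithOne A => jequiv y x₀)) = J0 := by
        rw [hJ0]; ext y
        simp only [Finset.mem_filter, Finset.mem_univ, true_and]
        exact ⟨fun h => ⟨hJclT y h, h⟩, fun h => h.2⟩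
      have hJ0T : J0 ⊆ T := by rw [hJ0]; exact Finset.filter_subset _ _
      have hJ0leT : J0.card ≤ T.card := Finset.card_le_card hJ0T
      have hmax' : ∀ y ∈ T, jle x₀ y → jequiv y x₀ := fun y hy h => ⟨hx₀max y hy h, h⟩
      have hyl1 : ∀ t : FactTree A, yieldList [t] = yield t := by intro t; simp
      -- smooth blocks give smooth hypotheses
      have hSmooth : ∀ (u g v : List (FactTree A)), ts = u ++ g ++ v → g ≠ [] →
          jequiv (mv g) x₀ →
          Hyp x₀ 1 1 g ∧ jequiv (1 * mv g * 1) x₀ := by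
        intro u g v hspl hg hjg
        have hseg : ∀ as ys bs, g = as ++ ys ++ bs → ys ≠ [] → jequiv (mv ys) x₀ := by
          intro as ys bs hgs hys
          have hts2 : ts = (u ++ as) ++ ys ++ (bs ++ v) := by
            rw [hspl, hgs]; simp [List.append_assoc]
          have hmem : mv ys ∈ T := hfacT _ _ _ hts2 hys
          have hjle : jle (mv g) (mv ys) := by
            rw [hgs]
            exact ⟨mv as, mv bs, by rw [mv_append, mv_append]⟩
          exact hmax' _ hmem (jle_trans hjg.2 hjle)
        refine ⟨⟨?_, ?_, ?_, ?_⟩, ?_⟩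
        · intro xs ys zs h hys; exact hseg xs ys zs h hys
        · intro xs ys h hxs
          rw [one_mul]
          exact hseg [] xs ys (by simpa using h) hxs
        · intro xs ys h hys
          rw [mul_one]
          exact hseg xs ys [] (by simpa using h) hys
        · intro t htm
          refine hitems t ?_
          rw [hspl]
          simp only [List.mem_append]
          tauto
        · rw [one_mul, mul_one]; exact hjg
      by_cases hT1 : T.card = 1
      · -- the singleton class case
        have hTx : ∀ z ∈ T, z = x₀ := by
          intro z hz
          exact Finset.card_le_one.1 (le_of_eq hT1) z hz x₀ hx₀T
        have hitemval : ∀ t ∈ ts, mv [t] = x₀ := by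
          intro t htm
          obtain ⟨uu, vv, huv⟩ := List.append_of_mem htm
          have hseg : ts = uu ++ [t] ++ vv := by rw [huv]; simp
          exact hTx _ (hfacT uu [t] vv hseg (by simp))
        obtain ⟨t₁, rest, rfl⟩ : ∃ t₁ rest, ts = t₁ :: rest := by
          cases ts with
          | nil => exact absurd rfl hts
          | cons a l => exact ⟨a, l, rfl⟩
        obtain ⟨e, he_sprod, he_mv⟩ := mv_eq_coe (ts := [t₁]) (by simp)
          (fun t ht => by
            rw [List.mem_singleton.1 ht]
            exact (hitems t₁ (by simp)).2)
        have hx₀e : x₀ = (e : WithOne A) := by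
          rw [← hitemval t₁ (by simp), he_mv]
        have hsprod_all : ∀ t ∈ t₁ :: rest, sprod (yield t) = some e := by
          intro t htm
          obtain ⟨e', h1, h2⟩ := mv_eq_coe (ts := [t]) (by simp)
            (fun t' ht' => by
              rw [List.mem_singleton.1 ht']
              exact (hitems t htm).2)
          have he'e : (e' : WithOne A) = (e : WithOne A) := by
            rw [← h2, hitemval t htm, hx₀e]
          rw [← hyl1 t, h1]
          congr 1
          exact_mod_cast he'e
        rcases eq_or_ne rest [] with rfl | hrest
        · -- single item
          obtain ⟨Tr, h1, h2, h3⟩ := C2base junk hjunk t₁ (hitems t₁ (by simp)).1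
          refine ⟨Tr, h1, by simpa using h2, ?_⟩
          cases junk with
          | none =>
              simp only [Option.elim] at h3 ⊢
              simp only [depthList_cons, depthList_nil]
              omega
          | some j =>
              simp only [Option.elim] at h3 ⊢
              simp only [depthList_cons, depthList_nil]
              omega
        · -- several items: idempotent
          have hidem : e * e = e := by
            obtain ⟨t₂, rest', rfl⟩ : ∃ t₂ rest', rest = t₂ :: rest' := by
              cases rest with
              | nil => exact absurd rfl hrest
              | cons a l => exact ⟨a, l, rfl⟩
            have hseg : t₁ :: t₂ :: rest' = [] ++ [t₁, t₂] ++ rest' := by simp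
            have hv : mv [t₁, t₂] = x₀ := hTx _ (hfacT _ _ _ hseg (by simp))
            have hv2 : mv [t₁, t₂] = mv [t₁] * mv [t₂] := by
              have : [t₁, t₂] = [t₁] ++ [t₂] := rfl
              rw [this, mv_append]
            rw [hv2, hitemval t₁ (by simp), hitemval t₂ (by simp), hx₀e,
              ← WithOne.coe_mul] at hv
            exact_mod_cast hv
          cases junk with
          | none =>
              refine ⟨FactTree.node (t₁ :: rest),
                isFactorization_nodeE (by simp) (fun t ht => (hitems t ht).1) e hidem
                  hsprod_all, by simp, ?_⟩
              simp only [Option.elim, depth_node]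
              omega
          | some j =>
              have hrestfac : IsFactorization (FactTree.node rest) :=
                isFactorization_nodeE hrest
                  (fun t ht => (hitems t (List.mem_cons_of_mem _ ht)).1) e hidem
                  (fun t ht => hsprod_all t (List.mem_cons_of_mem _ ht))
              refine ⟨FactTree.node [FactTree.node [j, t₁], FactTree.node rest],
                isFactorization_node2
                  (isFactorization_node2 (hjunk j rfl) (hitems t₁ (by simp)).1) hrestfac,
                ?_, ?_⟩
              · simp [List.append_assoc]
              · simp only [Option.elim, depth_node2, depth_node, depthList_cons, depthList_nil]
                have hd1 : depth t₁ ≤ depthList (t₁ :: rest) := depth_le_depthList (by simp)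
                have hd2 : depthList rest ≤ depthList (t₁ :: rest) := by simp
                rw [hT1]
                omega
      · have hT2 : 2 ≤ T.card := by
          have := Finset.card_pos.2 hTne
          omega
        by_cases hA : jequiv (mv ts) x₀
        · -- smooth case
          obtain ⟨H, hall⟩ := hSmooth [] ts [] (by simp) hts hA
          have hkcard := Pairs_card_le H hall
          rw [hJcl_eq] at hkcard
          obtain ⟨Tr, h1, h2, h3⟩ := C2 J0.card x₀ 1 1 junk ts hts hjunk hkcard H
          refine ⟨Tr, h1, h2, ?_⟩
          cases junk with
          | none => simp only [Option.elim] at h3 ⊢; omega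
          | some j => simp only [Option.elim] at h3 ⊢; omega
        · -- ideal case
          obtain ⟨b0, L, hjoin, hb0good, hLprops⟩ := greedy x₀ ts.length ts (le_refl _)
          have hLne : L ≠ [] := by
            intro hL0
            rw [hL0] at hjoin
            simp only [List.map_nil, List.flatten_nil, List.append_nil] at hjoin
            rcases hb0good with hb00 | hb0j
            · rw [hjoin, hb00] at hts; exact hts rfl
            · rw [← hjoin] at hb0j; exact hA hb0j
          obtain ⟨I, hI⟩ : ∃ I, I = T \ J0 := ⟨_, rfl⟩
          have hIJ : I.card = T.card - J0.card := by
            rw [hI]; exact Finset.card_sdiff_of_subset hJ0T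
          have hIcard : I.card ≤ N := by omega
          have hIT : I ⊆ T := by rw [hI]; exact Finset.sdiff_subset
          have hInoJ : ∀ z ∈ I, ¬ jequiv z x₀ := by
            intro z hz hc
            rw [hI, Finset.mem_sdiff] at hz
            exact hz.2 (by rw [hJ0]; exact Finset.mem_filter.2 ⟨hz.1, hc⟩)
          have hsatI : ∀ x ∈ I, ∀ y, jequiv y x → y ∈ I := by
            intro x hx y hy
            rw [hI, Finset.mem_sdiff]
            have hxT : x ∈ T := hIT hx
            refine ⟨hsat x hxT y hy, ?_⟩
            intro hyJ
            rw [hJ0, Finset.mem_filter] at hyJ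
            exact hInoJ x hx (hy.symm.trans hyJ.2)
          have honeI : (1 : WithOne A) ∉ I := fun h => hone (hIT h)
          have hdownI : ∀ z w, z ∈ T → w ∈ I → jle z w → z ∈ I := by
            intro z w hzT hwI hzw
            rw [hI, Finset.mem_sdiff]
            refine ⟨hzT, ?_⟩
            intro hzJ
            rw [hJ0, Finset.mem_filter] at hzJ
            exact hInoJ w hwI (hmax' w (hIT hwI) (jle_trans hzJ.2.2 hzw))
          -- build the derived items
          have DLIST : ∀ (L' : List (FactTree A × List (FactTree A)))
              (pre' : List (FactTree A)),
              ts = pre' ++ (L'.map blk).flatten →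
              (∀ cb ∈ L', ¬ jequiv (mv (blk cb)) x₀ ∧ (cb.2 = [] ∨ jequiv (mv cb.2) x₀)) →
              ∃ ds : List (FactTree A),
                List.Forall₂ (fun cb d => yield d = yieldList (blk cb)) L' ds ∧
                (∀ d ∈ ds, IsFactorization d ∧ yield d ≠ [] ∧
                  depth d ≤ 3 * J0.card + depthList ts) := by
            intro L'
            induction L' with
            | nil => intro pre' _ _; exact ⟨[], List.Forall₂.nil, by simp⟩
            | cons cb L'' ihL =>
                intro pre' hjoin' hprops'
                obtain ⟨c, b⟩ := cb
                have hts2 : ts = (pre' ++ (c :: b)) ++ (L''.map blk).flatten := by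
                  rw [hjoin']
                  simp [blk, List.append_assoc]
                obtain ⟨ds'', hF2'', hprops''⟩ := ihL (pre' ++ (c :: b)) hts2
                  (fun cb' h => hprops' cb' (List.mem_cons_of_mem _ h))
                have hcmem : c ∈ ts := by
                  rw [hjoin']
                  simp [blk]
                have hcitem := hitems c hcmem
                rcases eq_or_ne b [] with rfl | hbne
                · refine ⟨c :: ds'', List.Forall₂.cons (by simp [blk]) hF2'', ?_⟩
                  intro d hd
                  rcases List.mem_cons.1 hd with rfl | hd
                  · refine ⟨hcitem.1, hcitem.2, ?_⟩
                    have := depth_le_depthList hcmem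
                    omega
                  · exact hprops'' d hd
                · have hbgood : jequiv (mv b) x₀ :=
                    ((hprops' (c, b) (by simp)).2).resolve_left hbne
                  have hts3 : ts = (pre' ++ [c]) ++ b ++ (L''.map blk).flatten := by
                    rw [hjoin']
                    simp [blk, List.append_assoc]
                  obtain ⟨Hb, hallb⟩ := hSmooth (pre' ++ [c]) b ((L''.map blk).flatten)
                    hts3 hbne hbgood
                  have hkb := Pairs_card_le Hb hallb
                  rw [hJcl_eq] at hkb
                  obtain ⟨d, hd1, hd2, hd3⟩ := C2 J0.card x₀ 1 1 (some c) b hbne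
                    (fun j hj => by
                      obtain rfl : c = j := by simpa using hj
                      exact hcitem.1) hkb Hb
                  simp only [Option.elim] at hd2 hd3
                  have hbsub : ∀ t ∈ b, t ∈ ts := by
                    intro t htm
                    rw [hts3]
                    simp only [List.mem_append]
                    tauto
                  refine ⟨d :: ds'', List.Forall₂.cons ?_ hF2'', ?_⟩
                  · rw [hd2]; simp [blk]
                  · intro dd hdd
                    rcases List.mem_cons.1 hdd with rfl | hdd
                    · refine ⟨hd1, ?_, ?_⟩
                      · rw [hd2]; exact app_ne_left hcitem.2
                      · have hdb : depthList b ≤ depthList ts := depthList_subset hbsub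
                        have hdc : depth c ≤ depthList ts := depth_le_depthList hcmem
                        omega
                    · exact hprops'' dd hdd
          obtain ⟨ds, hF2, hdprops⟩ := DLIST L b0 hjoin hLprops
          have hdsne : ds ≠ [] := by
            intro h0
            rw [h0] at hF2
            cases hF2
            exact hLne rfl
          have hfacI : ∀ xs ys zs, ds = xs ++ ys ++ zs → ys ≠ [] → mv ys ∈ I := by
            intro xs ys zs hds hys
            obtain ⟨aL, bcL, hL1, hFa, hFbc⟩ := forall₂_append_split hF2
              (as := xs) (bs := ys ++ zs) (by rw [hds, List.append_assoc])
            obtain ⟨bL, cL, hL2, hFb, hFc⟩ := forall₂_append_split hFbc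
              (as := ys) (bs := zs) rfl
            have hmveq : mv ys = mv ((bL.map blk).flatten) :=
              mv_yield_eq (forall₂_yieldList hFb)
            obtain ⟨cb₁, bL', rfl⟩ : ∃ cb₁ bL', bL = cb₁ :: bL' := by
              cases bL with
              | nil => cases hFb; exact absurd rfl hys
              | cons a l => exact ⟨a, l, rfl⟩
            have hts4 : ts = (b0 ++ (aL.map blk).flatten) ++
                ((cb₁ :: bL').map blk).flatten ++ (cL.map blk).flatten := by
              rw [hjoin, hL1, hL2]
              simp [List.append_assoc]
            have hflatne : (((cb₁ :: bL').map blk).flatten : List (FactTree A)) ≠ [] := by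
              simp [blk]
            have hmemT : mv (((cb₁ :: bL').map blk).flatten) ∈ T :=
              hfacT _ _ _ hts4 hflatne
            have hjle2 : jle (mv (((cb₁ :: bL').map blk).flatten)) (mv (blk cb₁)) := by
              simp only [List.map_cons, List.flatten_cons, mv_append]
              exact ⟨1, mv ((bL'.map blk).flatten), by rw [one_mul]⟩
            have hts5 : ts = (b0 ++ (aL.map blk).flatten) ++ blk cb₁ ++
                ((bL'.map blk).flatten ++ (cL.map blk).flatten) := by
              rw [hjoin, hL1, hL2]
              simp [blk, List.append_assoc]
            have hheadT : mv (blk cb₁) ∈ T := hfacT _ _ _ hts5 (blk_ne cb₁)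
            have hheadI : mv (blk cb₁) ∈ I := by
              rw [hI, Finset.mem_sdiff]
              refine ⟨hheadT, ?_⟩
              intro hmem
              rw [hJ0, Finset.mem_filter] at hmem
              exact (hLprops cb₁ (by rw [hL1, hL2]; simp)).1 hmem.2
            rw [hmveq]
            exact hdownI _ _ hmemT hheadI hjle2
          have hdd : depthList ds ≤ 3 * J0.card + depthList ts :=
            depthList_le (fun d hd => (hdprops d hd).2.2)
          have hitemsI : ∀ d ∈ ds, IsFactorization d ∧ yield d ≠ [] :=
            fun d hd => ⟨(hdprops d hd).1, (hdprops d hd).2.1⟩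
          rcases eq_or_ne b0 [] with rfl | hb0ne
          · obtain ⟨Tr, h1, h2, h3⟩ := ihN I hIcard hsatI honeI ds hdsne hfacI hitemsI
              junk hjunk
            refine ⟨Tr, h1, ?_, ?_⟩
            · rw [h2]
              congr 1
              rw [forall₂_yieldList hF2]
              rw [hjoin]
              simp
            · cases junk with
              | none => simp only [Option.elim] at h3 ⊢; omega
              | some j => simp only [Option.elim] at h3 ⊢; omega
          · have hb0good' : jequiv (mv b0) x₀ := hb0good.resolve_left hb0ne
            obtain ⟨Hb0, hallb0⟩ := hSmooth [] b0 ((L.map blk).flatten)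
              (by rw [hjoin]; simp) hb0ne hb0good'
            have hkb0 := Pairs_card_le Hb0 hallb0
            rw [hJcl_eq] at hkb0
            obtain ⟨J', hJ'1, hJ'2, hJ'3⟩ := C2 J0.card x₀ 1 1 junk b0 hb0ne hjunk hkb0 Hb0
            obtain ⟨Tr, h1, h2, h3⟩ := ihN I hIcard hsatI honeI ds hdsne hfacI hitemsI
              (some J') (fun j hj => by
                obtain rfl : J' = j := by simpa using hj
                exact hJ'1)
            have hb0sub : ∀ t ∈ b0, t ∈ ts := by
              intro t htm
              rw [hjoin]
              exact List.mem_append_left _ htm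
            have hdb0 : depthList b0 ≤ depthList ts := depthList_subset hb0sub
            refine ⟨Tr, h1, ?_, ?_⟩
            · rw [h2]
              have helim : (Option.elim (some J') [] yield) = yield J' := rfl
              rw [helim, hJ'2, forall₂_yieldList hF2, hjoin]
              simp only [yieldList_append, List.append_assoc]
            · simp only [Option.elim] at h3
              cases junk with
              | none =>
                  simp only [Option.elim] at hJ'3 ⊢
                  omega
              | some j =>
                  simp only [Option.elim] at hJ'3 ⊢
                  omega

end Emain

section TopGlue

variable {A : Type*} [Semigroup A] [Fintype A]

lemma yieldList_map_leaf (s : List A) : yieldList (s.map FactTree.leaf) = s := by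
  induction s with
  | nil => rfl
  | cons a l ih => simp [ih]

lemma depthList_map_leaf (s : List A) : depthList (s.map FactTree.leaf) = 0 := by
  induction s with
  | nil => rfl
  | cons a l ih => simp [ih]

end TopGlue

end FFProof

/-- **Simon / Colcombet.** For every finite semigroup `A` and every nonempty string of
elements of `A`, there exists an `A`-factorization tree of depth at most `3·|A|`
yielding this string. -/
theorem factorization_forest {A : Type*} [Semigroup A] [Fintype A]
    (s : List A) (hs : s ≠ []) :
    ∃ T : FactTree A, T.IsFactorization ∧ T.yield = s ∧ T.depth ≤ 3 * Fintype.card A := by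
  classical
  open FactTree FFProof in
  obtain ⟨T₀, hT₀⟩ : ∃ T₀ : Finset (WithOne A), T₀ = (Finset.univ.erase (1 : WithOne A)) :=
    ⟨_, rfl⟩
  have hcardT₀ : T₀.card = Fintype.card A := by
    rw [hT₀, Finset.card_erase_of_mem (Finset.mem_univ _), Finset.card_univ]
    have h := (Fintype.card_option : Fintype.card (Option A) = Fintype.card A + 1)
    have h2 : Fintype.card (WithOne A) = Fintype.card (Option A) := rfl
    omega
  have hsat : ∀ x ∈ T₀, ∀ y, FFProof.jequiv y x → y ∈ T₀ := by
    intro x hx y hy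
    rw [hT₀, Finset.mem_erase]
    refine ⟨?_, Finset.mem_univ _⟩
    intro hy1
    rw [hy1] at hy
    have hx1 : x = 1 := FFProof.eq_one_of_jle_one hy.1
    rw [hT₀, Finset.mem_erase] at hx
    exact hx.1 hx1
  have hone : (1 : WithOne A) ∉ T₀ := by rw [hT₀]; simp
  have hmemitems : ∀ t ∈ s.map FactTree.leaf,
      FactTree.IsFactorization t ∧ FactTree.yield t ≠ [] := by
    intro t ht
    obtain ⟨a, -, rfl⟩ := List.mem_map.1 ht
    exact ⟨trivial, by simp⟩
  have hfacT : ∀ xs ys zs, s.map FactTree.leaf = xs ++ ys ++ zs → ys ≠ [] →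
      FFProof.mv ys ∈ T₀ := by
    intro xs ys zs hsplit hys
    rw [hT₀, Finset.mem_erase]
    refine ⟨?_, Finset.mem_univ _⟩
    have hyne : FactTree.yieldList ys ≠ [] := by
      apply FFProof.yieldList_ne_nil hys
      intro t htm
      refine (hmemitems t ?_).2
      rw [hsplit]
      simp only [List.mem_append]
      tauto
    intro h1
    exact hyne (FFProof.mval_eq_one_iff.1 h1)
  obtain ⟨Tr, h1, h2, h3⟩ := FFProof.Ethm (Fintype.card A) T₀ (le_of_eq hcardT₀)
    hsat hone (s.map FactTree.leaf) (by simpa using hs) hfacT hmemitems none (by simp)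
  refine ⟨Tr, h1, ?_, ?_⟩
  · rw [h2]
    simp [FFProof.yieldList_map_leaf]
  · simp only [Option.elim] at h3
    rw [FFProof.depthList_map_leaf] at h3
    omega
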